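/- arXiv:2206.14303 — 6 statements merged into one kernel-verified Lean document; each statement's English description precedes it below -/
import Mathlib

section
/- Suppose every column of X satisfies ‖X_j‖₂² = n, and let σ̃₀² > 0. If S_r ⊆ S_s, then D_r / D_s ≤ (1 + n σ̃₀²)^{|S_s \ S_r| / 2}. -/
/-!
By Sylvester's identity `det (I + t X_Sᵀ X_S) = det (I + t ∑_{j ∈ S} x_j x_jᵀ)`, so enlarging `S`
by one column `x` is a rank-one update of `M = I + t ∑_{j ∈ S} x_j x_jᵀ`. The matrix determinant
lemma multiplies the determinant by `1 + t xᵀ M⁻¹ x`, and `M ≥ I` gives `xᵀ M⁻¹ x ≤ ‖x‖² = n`.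
Hence `det A_s ≤ det A_r (1 + n t)^{|s \ r|}`, and taking `-1/2` powers gives the claim.
-/

open Matrix

noncomputable section

/-- The `n × |S|` submatrix of `X` consisting of the columns indexed by `S`. -/
def subcols {n p : ℕ} (X : Matrix (Fin n) (Fin p) ℝ) (S : Finset (Fin p)) :
    Matrix (Fin n) {j // j ∈ S} ℝ :=
  Matrix.of fun i j => X i j.1

/-- `Φ_S = X_S (X_Sᵀ X_S)⁻¹ X_Sᵀ`, the orthogonal projection onto the column span of `X_S`
(when `X_S` has full column rank). -/
def proj {n p : ℕ} (X : Matrix (Fin n) (Fin p) ℝ) (S : Finset (Fin p)) :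
    Matrix (Fin n) (Fin n) ℝ :=
  subcols X S * ((subcols X S)ᵀ * subcols X S)⁻¹ * (subcols X S)ᵀ

/-- `D_S = det(I + σ̃₀² X_Sᵀ X_S)^{-1/2}` (here `t = σ̃₀²`). -/
def Dmat {n p : ℕ} (X : Matrix (Fin n) (Fin p) ℝ) (t : ℝ) (S : Finset (Fin p)) : ℝ :=
  ((1 : Matrix {j // j ∈ S} {j // j ∈ S} ℝ) + t • ((subcols X S)ᵀ * subcols X S)).det
    ^ (-(1 : ℝ) / 2)

section

variable {m : Type*} [Fintype m]

theorem posSemidef_smul_sum_vecMulVec_self {ι : Type*} (v : ι → m → ℝ) {t : ℝ} (ht : 0 ≤ t)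
    (S : Finset ι) : (t • ∑ j ∈ S, vecMulVec (v j) (v j)).PosSemidef :=
  (posSemidef_sum S fun j _ => by simpa using posSemidef_vecMulVec_self_star (v j)).smul ht

variable [DecidableEq m]

theorem dotProduct_inv_one_add_mulVec_le {P : Matrix m m ℝ} (hP : P.PosSemidef) (x : m → ℝ) :
    x ⬝ᵥ ((1 + P)⁻¹ *ᵥ x) ≤ x ⬝ᵥ x := by
  set y := (1 + P)⁻¹ *ᵥ x
  have hunit : IsUnit (1 + P).det := (PosDef.one.add_posSemidef hP).isUnit.map detMonoidHom
  have hx : x = y + P *ᵥ y := by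
    have h : (1 + P) *ᵥ y = x := by rw [mulVec_mulVec, mul_nonsing_inv _ hunit, one_mulVec]
    rwa [add_mulVec, one_mulVec, eq_comm] at h
  have hPy : 0 ≤ y ⬝ᵥ P *ᵥ y := by simpa using hP.dotProduct_mulVec_nonneg y
  have hsq : 0 ≤ P *ᵥ y ⬝ᵥ P *ᵥ y := by simpa using dotProduct_star_self_nonneg (P *ᵥ y)
  have : x ⬝ᵥ x - x ⬝ᵥ y = y ⬝ᵥ P *ᵥ y + P *ᵥ y ⬝ᵥ P *ᵥ y := by
    rw [hx]
    simp only [add_dotProduct, dotProduct_add]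
    rw [dotProduct_comm (P *ᵥ y) y]
    ring
  linarith

theorem det_one_add_add_smul_vecMulVec_le {P : Matrix m m ℝ} (hP : P.PosSemidef) {t : ℝ}
    (ht : 0 ≤ t) (x : m → ℝ) :
    (1 + P + t • vecMulVec x x).det ≤ (1 + P).det * (1 + (x ⬝ᵥ x) * t) := by
  have hpos := PosDef.one.add_posSemidef hP
  have hrank_one : t • vecMulVec x x = replicateCol Unit (t • x) * replicateRow Unit x := by
    rw [← vecMulVec_eq, smul_vecMulVec]
  rw [hrank_one, det_add_replicateCol_mul_replicateRow (hpos.isUnit.map detMonoidHom),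
    det_unique (n := Unit)]
  refine mul_le_mul_of_nonneg_left ?_ hpos.det_pos.le
  have hquad : (replicateRow Unit x * (1 + P)⁻¹ * replicateCol Unit (t • x)) default default
      = (x ⬝ᵥ ((1 + P)⁻¹ *ᵥ x)) * t := by
    rw [Matrix.mul_assoc, ← replicateCol_mulVec, mulVec_smul, replicateRow_mul_replicateCol_apply,
      dotProduct_smul, smul_eq_mul, mul_comm]
  rw [Matrix.add_apply, one_apply_eq, hquad]
  gcongr
  exact dotProduct_inv_one_add_mulVec_le hP x

theorem det_one_add_smul_sum_vecMulVec_union_le {ι : Type*} [DecidableEq ι] (v : ι → m → ℝ)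
    {t : ℝ} (ht : 0 ≤ t) (r : Finset ι) {u : Finset ι} (hru : Disjoint r u) :
    (1 + t • ∑ j ∈ r ∪ u, vecMulVec (v j) (v j)).det ≤
      (1 + t • ∑ j ∈ r, vecMulVec (v j) (v j)).det * ∏ j ∈ u, (1 + (v j ⬝ᵥ v j) * t) := by
  have hfactor (j : ι) : 0 ≤ 1 + (v j ⬝ᵥ v j) * t :=
    add_nonneg zero_le_one (mul_nonneg (Finset.sum_nonneg fun i _ => mul_self_nonneg _) ht)
  induction u using Finset.induction_on with
  | empty => simp
  | @insert a u ha ih =>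
    rw [Finset.disjoint_insert_right] at hru
    have ha' : a ∉ r ∪ u := by simp [ha, hru.1]
    rw [Finset.union_insert, Finset.sum_insert ha', smul_add, add_comm (t • vecMulVec _ _),
      ← add_assoc, Finset.prod_insert ha, mul_comm (1 + _ * t), ← mul_assoc]
    exact (det_one_add_add_smul_vecMulVec_le (posSemidef_smul_sum_vecMulVec_self v ht _) ht _).trans
      (mul_le_mul_of_nonneg_right (ih hru.2) (hfactor a))

end

theorem rpow_neg_half_div_rpow_neg_half_le {a b c : ℝ} (ha : 0 < a) (hb : 0 < b) (hc : 0 ≤ c)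
    (k : ℕ) (h : b ≤ a * c ^ k) : a ^ (-(1 : ℝ) / 2) / b ^ (-(1 : ℝ) / 2) ≤ c ^ ((k : ℝ) / 2) := by
  rw [neg_div, Real.rpow_neg ha.le, Real.rpow_neg hb.le, inv_div_inv, ← Real.div_rpow hb.le ha.le,
    div_eq_mul_one_div (k : ℝ), Real.rpow_mul hc, Real.rpow_natCast]
  gcongr
  rwa [div_le_iff₀' ha]

theorem det_one_add_smul_transpose_mul_comm {R k l : Type*} [CommRing R] [Fintype k] [Fintype l]
    [DecidableEq k] [DecidableEq l] (A : Matrix k l R) (t : R) :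
    (1 + t • (Aᵀ * A)).det = (1 + t • (A * Aᵀ)).det := by
  rw [← Matrix.smul_mul, det_one_add_mul_comm, Matrix.mul_smul]

theorem Dmat_eq_det_sum_vecMulVec {n p : ℕ} (X : Matrix (Fin n) (Fin p) ℝ) (t : ℝ)
    (S : Finset (Fin p)) :
    Dmat X t S =
      (1 + t • ∑ j ∈ S, vecMulVec (fun i => X i j) (fun i => X i j)).det ^ (-(1 : ℝ) / 2) := by
  have hgram : subcols X S * (subcols X S)ᵀ =
      ∑ j ∈ S, vecMulVec (fun i => X i j) (fun i => X i j) := by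
    ext i k
    simp only [subcols, mul_apply, transpose_apply, of_apply, Matrix.sum_apply, vecMulVec_apply]
    exact Finset.sum_attach S fun j => X i j * X k j
  rw [Dmat, det_one_add_smul_transpose_mul_comm, hgram]

theorem stmt_1_general {n p : ℕ} (X : Matrix (Fin n) (Fin p) ℝ)
    (t : ℝ) (ht : 0 < t)
    (hcols : ∀ j : Fin p, (fun i => X i j) ⬝ᵥ (fun i => X i j) = (n : ℝ))
    (r s : Finset (Fin p)) (hrs : r ⊆ s) :
    Dmat X t r / Dmat X t s ≤ (1 + (n : ℝ) * t) ^ (((s \ r).card : ℝ) / 2) := by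
  set v : Fin p → Fin n → ℝ := fun j i => X i j
  have hdet_pos (S : Finset (Fin p)) : 0 < (1 + t • ∑ j ∈ S, vecMulVec (v j) (v j)).det :=
    (PosDef.one.add_posSemidef (posSemidef_smul_sum_vecMulVec_self v ht.le S)).det_pos
  have hkey := det_one_add_smul_sum_vecMulVec_union_le v ht.le r (Finset.disjoint_sdiff (t := s))
  rw [Finset.union_sdiff_of_subset hrs, Finset.prod_congr rfl fun j _ => by rw [hcols j],
    Finset.prod_const] at hkey
  rw [Dmat_eq_det_sum_vecMulVec, Dmat_eq_det_sum_vecMulVec]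
  exact rpow_neg_half_div_rpow_neg_half_le (hdet_pos r) (hdet_pos s) (by positivity) _ hkey

/-- If every column of `X` satisfies `‖X_j‖₂² = n`, `σ̃₀² > 0` and
`S_r ⊆ S_s`, then `D_r / D_s ≤ (1 + n σ̃₀²)^{|S_s \ S_r| / 2}`. -/
theorem stmt_1 {n p : ℕ} (hn : 1 ≤ n) (hp : 1 ≤ p) (X : Matrix (Fin n) (Fin p) ℝ)
    (t : ℝ) (ht : 0 < t)
    (hcols : ∀ j : Fin p, (fun i => X i j) ⬝ᵥ (fun i => X i j) = (n : ℝ))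
    (r s : Finset (Fin p)) (hrs : r ⊆ s) :
    Dmat X t r / Dmat X t s ≤ (1 + (n : ℝ) * t) ^ (((s \ r).card : ℝ) / 2) :=
  stmt_1_general X t ht hcols r s hrs
end
end

section
/- Let X ∈ ℝ^{n×p}, β* ∈ ℝ^p, σ > 0, p > 1, and suppose ‖X β*‖₂² ≤ B₁ n σ² log p with B₁ ≥ 1, B₁ log p ≥ 3, and n ≥ 25 log p. Let y = X β* + e where e ~ N(0, σ² I_n). Then P[ ‖y‖₂² ≤ 3 n σ² B₁ log p ] ≥ 1 − 2 p^{−1}. -/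
/-!
Split `‖Xβ* + e‖² ≤ 2‖Xβ*‖² + 2‖e‖²`; the signal term contributes at most `2 B₁ n σ² log p`, so it
suffices that `‖e‖² < (3/2) n σ² ≤ (1/2) n σ² B₁ log p`. The Chernoff bound for the χ²-variable
`‖e‖²/σ²` at `t = 1/(6σ²)`, where `E exp(t e_i²) = (1 - 2tσ²)^{-1/2} = √(3/2)`, bounds the
probability of the complement by `exp(-n/4) (3/2)^{n/2} ≤ exp(-n/25) ≤ 1/p`, using
`log (3/2) ≤ 21/50` and `n ≥ 25 log p`.
-/

noncomputable section

open Matrix MeasureTheory ProbabilityTheory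

/-- The Gaussian measure `N(0, v Iₙ)` on `ℝⁿ`: `n` i.i.d. `N(0, v)` coordinates. -/
def gaussVec (n : ℕ) (v : NNReal) : Measure (Fin n → ℝ) :=
  Measure.pi fun _ => gaussianReal 0 v

open Real

section SquaredGaussian

variable {v : NNReal} {t : ℝ}

lemma gaussianPDFReal_zero_mul_exp_mul_sq (hv : v ≠ 0) (t x : ℝ) :
    gaussianPDFReal 0 v x * exp (t * x ^ 2) =
      (√(2 * π * v))⁻¹ * exp (-((2 * (v : ℝ))⁻¹ - t) * x ^ 2) := by
  have hv' : (v : ℝ) ≠ 0 := by exact_mod_cast hv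
  rw [gaussianPDFReal, mul_assoc, ← exp_add]
  congr 2
  field_simp
  ring

lemma inv_two_mul_sub_pos (hv : v ≠ 0) (ht : 2 * t * v < 1) : 0 < (2 * (v : ℝ))⁻¹ - t := by
  have : (0 : ℝ) < v := by positivity
  rw [sub_pos, inv_eq_one_div, lt_div_iff₀ (by positivity)]
  linarith

lemma integrable_exp_mul_sq_gaussianReal (hv : v ≠ 0) (ht : 2 * t * v < 1) :
    Integrable (fun x => exp (t * x ^ 2)) (gaussianReal 0 v) := by
  rw [gaussianReal_of_var_ne_zero _ hv, integrable_withDensity_iff_integrable_smul'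
    (measurable_gaussianPDF 0 v) (ae_of_all _ fun _ => gaussianPDF_lt_top)]
  simp only [toReal_gaussianPDF, smul_eq_mul, gaussianPDFReal_zero_mul_exp_mul_sq hv]
  exact (integrable_exp_neg_mul_sq (inv_two_mul_sub_pos hv ht)).const_mul _

lemma integral_exp_mul_sq_gaussianReal (hv : v ≠ 0) (ht : 2 * t * v < 1) :
    ∫ x, exp (t * x ^ 2) ∂gaussianReal 0 v = (√(1 - 2 * t * v))⁻¹ := by
  have hb := inv_two_mul_sub_pos hv ht
  have hv' : (v : ℝ) ≠ 0 := by exact_mod_cast hv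
  simp only [integral_gaussianReal_eq_integral_smul hv, smul_eq_mul,
    gaussianPDFReal_zero_mul_exp_mul_sq hv]
  rw [integral_const_mul, integral_gaussian, ← sqrt_inv, ← sqrt_mul (by positivity), ← sqrt_inv]
  congr 1
  field_simp

lemma measureReal_pi_gaussianReal_sum_sq_ge_le {ι : Type*} [Fintype ι] (hv : v ≠ 0) (ht₀ : 0 ≤ t)
    (ht : 2 * t * v < 1) (c : ℝ) :
    (Measure.pi fun _ : ι => gaussianReal 0 v).real {x | c ≤ ∑ i, x i ^ 2} ≤
      exp (-t * c) * (√(1 - 2 * t * v))⁻¹ ^ Fintype.card ι := by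
  have hprod : (fun x : ι → ℝ => exp (t * ∑ i, x i ^ 2)) = fun x => ∏ i, exp (t * x i ^ 2) := by
    simp only [Finset.mul_sum, exp_sum]
  have hmgf : mgf (fun x : ι → ℝ => ∑ i, x i ^ 2) (Measure.pi fun _ => gaussianReal 0 v) t =
      (√(1 - 2 * t * v))⁻¹ ^ Fintype.card ι := by
    rw [mgf, hprod, integral_fintype_prod_eq_pow (fun y => exp (t * y ^ 2)),
      integral_exp_mul_sq_gaussianReal hv ht]
  rw [← hmgf]
  refine measure_ge_le_exp_mul_mgf c ht₀ ?_
  rw [hprod]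
  exact Integrable.fintype_prod fun _ => integrable_exp_mul_sq_gaussianReal hv ht

end SquaredGaussian

lemma gaussVec_real_sum_sq_ge_le (n : ℕ) {v : NNReal} (hv : v ≠ 0) :
    (gaussVec n v).real {x | 3 / 2 * n * v ≤ ∑ i, x i ^ 2} ≤ exp (-(n / 25)) := by
  have hv' : (v : ℝ) ≠ 0 := by exact_mod_cast hv
  have hlog : log (3 / 2) ≤ 21 / 50 := by
    have h := log_le_log (by positivity) (show (3 / 2 : ℝ) ^ 5 ≤ 2 ^ 3 by norm_num)
    rw [log_pow, log_pow] at h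
    push_cast at h
    nlinarith [log_two_lt_d9]
  calc (gaussVec n v).real {x | 3 / 2 * n * v ≤ ∑ i, x i ^ 2}
      ≤ exp (-(6 * (v : ℝ))⁻¹ * (3 / 2 * n * v)) * (√(1 - 2 * (6 * (v : ℝ))⁻¹ * v))⁻¹ ^ n := by
        rw [gaussVec]
        simpa using measureReal_pi_gaussianReal_sum_sq_ge_le (ι := Fin n) hv (by positivity)
          (by field_simp; norm_num) _
    _ = exp (-(n / 4)) * √(3 / 2) ^ n := by
        congr 2
        · field_simp
          ring
        · rw [show 1 - 2 * (6 * (v : ℝ))⁻¹ * v = (3 / 2)⁻¹ by field_simp; norm_num, sqrt_inv, inv_inv]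
    _ = exp (-(n / 4) + n * (log (3 / 2) / 2)) := by
        rw [exp_add, exp_nat_mul, ← log_sqrt (by norm_num), exp_log (by positivity)]
    _ ≤ exp (-(n / 25)) := by
        gcongr
        nlinarith [(Nat.cast_nonneg n : (0 : ℝ) ≤ n)]

lemma dotProduct_add_self_le {ι R : Type*} [Fintype ι] [CommRing R] [LinearOrder R]
    [IsStrictOrderedRing R] (a b : ι → R) :
    (a + b) ⬝ᵥ (a + b) ≤ 2 * (a ⬝ᵥ a) + 2 * (b ⬝ᵥ b) := by
  simp only [dotProduct, Pi.add_apply, Finset.mul_sum, ← Finset.sum_add_distrib]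
  exact Finset.sum_le_sum fun i _ => by nlinarith [sq_nonneg (a i - b i)]

lemma ofReal_one_sub_le_measure {α : Type*} [MeasurableSpace α] {μ : Measure α}
    [IsProbabilityMeasure μ] {s t : Set α} {ε : ℝ} (hε : 0 ≤ ε) (hs : μ s ≤ ENNReal.ofReal ε)
    (hst : sᶜ ⊆ t) : ENNReal.ofReal (1 - ε) ≤ μ t :=
  calc ENNReal.ofReal (1 - ε) = 1 - ENNReal.ofReal ε := by
        rw [ENNReal.ofReal_sub _ hε, ENNReal.ofReal_one]
    _ ≤ 1 - μ s := tsub_le_tsub_left hs _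
    _ ≤ μ sᶜ := by
        rw [tsub_le_iff_left, ← measure_univ (μ := μ)]
        exact measure_univ_le_add_compl s
    _ ≤ μ t := measure_mono hst

theorem stmt_5_general (n p : ℕ) (hp : 1 < p)
    (X : Matrix (Fin n) (Fin p) ℝ) (βs : Fin p → ℝ) (σ B₁ : ℝ)
    (hσ : 0 < σ)
    (hsig : (X.mulVec βs) ⬝ᵥ (X.mulVec βs) ≤ B₁ * n * σ ^ 2 * Real.log p)
    (hB₁p : 3 ≤ B₁ * Real.log p) (hn25 : 25 * Real.log p ≤ (n : ℝ)) :
    ENNReal.ofReal (1 - 2 / (p : ℝ)) ≤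
      gaussVec n (σ ^ 2).toNNReal
        {e | (X.mulVec βs + e) ⬝ᵥ (X.mulVec βs + e) ≤
          3 * n * σ ^ 2 * B₁ * Real.log p} := by
  set v := (σ ^ 2).toNNReal
  have hv : (v : ℝ) = σ ^ 2 := Real.coe_toNNReal _ (sq_nonneg σ)
  have hv₀ : v ≠ 0 := by simpa [v] using hσ.ne'
  have : IsProbabilityMeasure (gaussVec n v) := by rw [gaussVec]; infer_instance
  have hp₀ : (0 : ℝ) < p := by positivity
  have htail : gaussVec n v {x | 3 / 2 * n * v ≤ ∑ i, x i ^ 2} ≤ ENNReal.ofReal (2 / p) := by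
    rw [← ofReal_measureReal]
    refine ENNReal.ofReal_le_ofReal ((gaussVec_real_sum_sq_ge_le n hv₀).trans ?_)
    calc exp (-(n / 25)) ≤ exp (-log p) := by gcongr; linarith
      _ = 1 / p := by rw [exp_neg, exp_log hp₀, one_div]
      _ ≤ 2 / p := by gcongr; norm_num
  refine ofReal_one_sub_le_measure (by positivity) htail fun e he => ?_
  have he : e ⬝ᵥ e ≤ 3 / 2 * n * σ ^ 2 := by
    simp only [Set.mem_compl_iff, Set.mem_ofPred_eq, not_le, hv] at he
    simpa [dotProduct, sq] using he.le
  have hscale := mul_le_mul_of_nonneg_left hB₁p (by positivity : (0 : ℝ) ≤ n * σ ^ 2)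
  have hsplit := dotProduct_add_self_le (X.mulVec βs) e
  rw [Set.mem_ofPred_eq]
  nlinarith

/-- If `‖Xβ*‖₂² ≤ B₁ n σ² log p` with `B₁ ≥ 1`, `B₁ log p ≥ 3`,
`n ≥ 25 log p`, `p > 1`, and `y = Xβ* + e` with `e ~ N(0, σ² Iₙ)`, then
`P[‖y‖₂² ≤ 3 n σ² B₁ log p] ≥ 1 − 2 p⁻¹`. -/
theorem stmt_5 (n p : ℕ) (hn : 1 ≤ n) (hp : 1 < p)
    (X : Matrix (Fin n) (Fin p) ℝ) (βs : Fin p → ℝ) (σ B₁ : ℝ)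
    (hσ : 0 < σ) (hB₁ : 1 ≤ B₁)
    (hsig : (X.mulVec βs) ⬝ᵥ (X.mulVec βs) ≤ B₁ * n * σ ^ 2 * Real.log p)
    (hB₁p : 3 ≤ B₁ * Real.log p) (hn25 : 25 * Real.log p ≤ (n : ℝ)) :
    ENNReal.ofReal (1 - 2 / (p : ℝ)) ≤
      gaussVec n (σ ^ 2).toNNReal
        {e | (X.mulVec βs + e) ⬝ᵥ (X.mulVec βs + e) ≤
          3 * n * σ ^ 2 * B₁ * Real.log p} :=
  stmt_5_general n p hp X βs σ B₁ hσ hsig hB₁p hn25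
end
end

section
/- Let X ∈ ℝ^{n×p}, β* ∈ ℝ^p, σ, σ₀ > 0, σ̃₀² = σ₀²/σ², p > 1, and let r ∈ {0,1}^p be such that X_r has full column rank with λ_min(n^{-1} X_r^T X_r) ≥ ν for some ν > 0. Suppose ‖X β*‖₂² ≤ B₁ n σ² log p with B₁ ≥ 1, B₁ log p ≥ 3, and n ≥ 25 log p. Let y = X β* + e with e ~ N(0, σ² I_n). Then P[ R_r − R_r^* ≤ 3 B₁ σ² log p / (ν σ̃₀²) ] ≥ 1 − 2 p^{−1}. -/
/-!
Write `A = X_r`, `M = AᵀA` and `v = Aᵀy`. Then `R_r - R_r^* = vᵀ(M⁻¹ - (M + σ̃₀⁻² I)⁻¹)v`, and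
since `M ≥ νn I` this is at most `σ̃₀⁻²/(νn) · vᵀM⁻¹v = σ̃₀⁻²/(νn) · ‖Φ_r y‖² ≤ σ̃₀⁻²/(νn) · ‖y‖²`.
With `‖y‖² ≤ 2‖Xβ*‖² + 2‖e‖²` it suffices that `‖e‖² ≤ (3/2) n σ²`, which fails with probability
at most `e^{-n/25} ≤ p⁻¹` by a Chernoff bound: `E exp(‖e‖²/(6σ²)) = (3/2)^{n/2}`.
-/

open Matrix

noncomputable section

/-- `R_S = yᵀ(Iₙ − X_S(X_Sᵀ X_S + σ̃₀⁻² I)⁻¹ X_Sᵀ) y` (here `t = σ̃₀²`). -/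
def Rreg {n p : ℕ} (X : Matrix (Fin n) (Fin p) ℝ) (S : Finset (Fin p)) (t : ℝ)
    (y : Fin n → ℝ) : ℝ :=
  y ⬝ᵥ (((1 : Matrix (Fin n) (Fin n) ℝ) -
      subcols X S * ((subcols X S)ᵀ * subcols X S + t⁻¹ • 1)⁻¹ * (subcols X S)ᵀ).mulVec y)

/-- `R_S^* = yᵀ(Iₙ − Φ_S) y`. -/
def Rstar {n p : ℕ} (X : Matrix (Fin n) (Fin p) ℝ) (S : Finset (Fin p))
    (y : Fin n → ℝ) : ℝ :=
  y ⬝ᵥ (((1 : Matrix (Fin n) (Fin n) ℝ) - proj X S).mulVec y)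

open Matrix MeasureTheory ProbabilityTheory

namespace Matrix

variable {k m R : Type*} [Fintype k] [Fintype m]

theorem transpose_mulVec_dotProduct [CommSemiring R] (A : Matrix k m R) (y : k → R) (u : m → R) :
    (Aᵀ *ᵥ y) ⬝ᵥ u = y ⬝ᵥ A *ᵥ u := by
  rw [dotProduct_mulVec, mulVec_transpose]

theorem dotProduct_mul_mul_transpose_mulVec [CommSemiring R] (A : Matrix k m R)
    (K : Matrix m m R) (y : k → R) :
    y ⬝ᵥ (A * K * Aᵀ) *ᵥ y = (Aᵀ *ᵥ y) ⬝ᵥ K *ᵥ (Aᵀ *ᵥ y) := by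
  rw [← mulVec_mulVec, ← mulVec_mulVec, transpose_mulVec_dotProduct]

theorem dotProduct_self_nonneg [Ring R] [LinearOrder R] [IsStrictOrderedRing R]
    (v : m → R) : 0 ≤ v ⬝ᵥ v :=
  Finset.sum_nonneg fun i _ => mul_self_nonneg (v i)

section OrderedField

variable [Field R] [LinearOrder R] [IsStrictOrderedRing R]

theorem dotProduct_self_add_le (a e : m → R) :
    (a + e) ⬝ᵥ (a + e) ≤ 2 * a ⬝ᵥ a + 2 * e ⬝ᵥ e := by
  have := dotProduct_self_nonneg (a - e)
  simp only [add_dotProduct, dotProduct_add, sub_dotProduct, dotProduct_sub,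
    dotProduct_comm e a] at this ⊢
  linarith

/-- `‖Φ y‖² ≤ ‖y‖²` for the orthogonal projection `Φ = A (AᵀA)⁻¹ Aᵀ`. -/
theorem dotProduct_gram_inv_mulVec_le [DecidableEq m] (A : Matrix k m R)
    (hA : IsUnit (Aᵀ * A).det) (y : k → R) :
    (Aᵀ *ᵥ y) ⬝ᵥ (Aᵀ * A)⁻¹ *ᵥ (Aᵀ *ᵥ y) ≤ y ⬝ᵥ y := by
  obtain ⟨u, hu⟩ : ∃ u, (Aᵀ * A)⁻¹ *ᵥ (Aᵀ *ᵥ y) = u := ⟨_, rfl⟩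
  have hMu : (Aᵀ * A) *ᵥ u = Aᵀ *ᵥ y := by
    rw [← hu, mulVec_mulVec, mul_nonsing_inv _ hA, one_mulVec]
  have hAu : (A *ᵥ u) ⬝ᵥ (A *ᵥ u) = y ⬝ᵥ A *ᵥ u := by
    rw [← transpose_mulVec_dotProduct, mulVec_mulVec, hMu, transpose_mulVec_dotProduct]
  have := dotProduct_self_nonneg (y - A *ᵥ u)
  simp only [sub_dotProduct, dotProduct_sub, dotProduct_comm (A *ᵥ u) y] at this
  rw [hu, transpose_mulVec_dotProduct]
  linarith

variable {M : Matrix m m R} {c : R}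

theorem isUnit_det_of_le_dotProduct_mulVec [DecidableEq m] (hc : 0 < c)
    (hcM : ∀ u, c * u ⬝ᵥ u ≤ u ⬝ᵥ M *ᵥ u) : IsUnit M.det := by
  refine isUnit_iff_ne_zero.mpr fun hdet => ?_
  obtain ⟨u, hu0, hMu⟩ := exists_mulVec_eq_zero_iff.mpr hdet
  have := hcM u
  rw [hMu, dotProduct_zero] at this
  exact hu0 (dotProduct_self_eq_zero.mp (le_antisymm (nonpos_of_mul_nonpos_right this hc)
    (dotProduct_self_nonneg u)))

theorem le_dotProduct_add_smul_one_mulVec [DecidableEq m] {s : R} (hs : 0 ≤ s)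
    (hcM : ∀ u, c * u ⬝ᵥ u ≤ u ⬝ᵥ M *ᵥ u) (u : m → R) : c * u ⬝ᵥ u ≤ u ⬝ᵥ (M + s • 1) *ᵥ u := by
  have := hcM u
  have := mul_nonneg hs (dotProduct_self_nonneg u)
  simp only [add_mulVec, smul_mulVec, one_mulVec, dotProduct_add, dotProduct_smul, smul_eq_mul] at *
  linarith

/-- Expand `0 ≤ ‖Mz - c z‖²` and use `c ‖z‖² ≤ zᵀMz`. -/
theorem mul_dotProduct_mulVec_le (hc : 0 ≤ c) (hcM : ∀ u, c * u ⬝ᵥ u ≤ u ⬝ᵥ M *ᵥ u)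
    (z : m → R) : c * z ⬝ᵥ M *ᵥ z ≤ (M *ᵥ z) ⬝ᵥ (M *ᵥ z) := by
  have h := dotProduct_self_nonneg (M *ᵥ z - c • z)
  simp only [sub_dotProduct, dotProduct_sub, smul_dotProduct, dotProduct_smul,
    smul_eq_mul, dotProduct_comm (M *ᵥ z) z] at h
  nlinarith [mul_le_mul_of_nonneg_left (hcM z) hc]

/-- With `w = (M + s I)⁻¹ v` and `z = M⁻¹ w`, both sides are polynomials in `s` whose coefficients
`wᵀMw`, `‖w‖²`, `zᵀMz` are compared by the lower bound on `M` and `mul_dotProduct_mulVec_le`. -/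
theorem dotProduct_inv_sub_inv_add_smul_le [DecidableEq m] (hM : M.IsSymm) (hc : 0 < c)
    (hcM : ∀ u, c * u ⬝ᵥ u ≤ u ⬝ᵥ M *ᵥ u) {s : R} (hs : 0 ≤ s) (v : m → R) :
    v ⬝ᵥ M⁻¹ *ᵥ v - v ⬝ᵥ (M + s • 1)⁻¹ *ᵥ v ≤ s / c * v ⬝ᵥ M⁻¹ *ᵥ v := by
  have hMdet := isUnit_det_of_le_dotProduct_mulVec hc hcM
  have hNdet := isUnit_det_of_le_dotProduct_mulVec hc (le_dotProduct_add_smul_one_mulVec hs hcM)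
  obtain ⟨w, hw⟩ : ∃ w, (M + s • 1)⁻¹ *ᵥ v = w := ⟨_, rfl⟩
  obtain ⟨z, hz⟩ : ∃ z, M⁻¹ *ᵥ w = z := ⟨_, rfl⟩
  have hv : v = M *ᵥ w + s • w := by
    have : (M + s • 1) *ᵥ w = v := by
      rw [← hw, mulVec_mulVec, mul_nonsing_inv _ hNdet, one_mulVec]
    rwa [add_mulVec, smul_mulVec, one_mulVec, eq_comm] at this
  have hwz : M *ᵥ z = w := by rw [← hz, mulVec_mulVec, mul_nonsing_inv _ hMdet, one_mulVec]
  have hMinv : M⁻¹ *ᵥ v = w + s • z := by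
    rw [hv, mulVec_add, mulVec_mulVec, nonsing_inv_mul _ hMdet, one_mulVec, mulVec_smul, hz]
  have hsymm : (M *ᵥ w) ⬝ᵥ z = w ⬝ᵥ w := by
    rw [← vecMul_transpose, hM.eq, ← dotProduct_mulVec, hwz]
  have h1 : c * w ⬝ᵥ w ≤ (M *ᵥ w) ⬝ᵥ w := by rw [dotProduct_comm (M *ᵥ w)]; exact hcM w
  have h2 : c * w ⬝ᵥ z ≤ w ⬝ᵥ w := by
    simpa only [hwz, dotProduct_comm z w] using mul_dotProduct_mulVec_le hc.le hcM z
  have h3 : 0 ≤ w ⬝ᵥ z := by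
    have := hcM z
    rw [hwz, dotProduct_comm z w] at this
    exact (mul_nonneg hc.le (dotProduct_self_nonneg z)).trans this
  rw [hMinv, hw, hv]
  simp only [dotProduct_add, add_dotProduct, dotProduct_smul, smul_dotProduct, smul_eq_mul, hsymm]
  rw [div_mul_eq_mul_div, le_div_iff₀ hc]
  nlinarith [mul_le_mul_of_nonneg_left h1 hs, mul_le_mul_of_nonneg_left h2 (sq_nonneg s),
    mul_nonneg (sq_nonneg s) (dotProduct_self_nonneg w), mul_nonneg (pow_nonneg hs 3) h3]

end OrderedField

end Matrix

theorem Rreg_sub_Rstar_eq {n p : ℕ} (X : Matrix (Fin n) (Fin p) ℝ) (S : Finset (Fin p)) (t : ℝ)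
    (y : Fin n → ℝ) :
    Rreg X S t y - Rstar X S y =
      ((subcols X S)ᵀ *ᵥ y) ⬝ᵥ ((subcols X S)ᵀ * subcols X S)⁻¹ *ᵥ ((subcols X S)ᵀ *ᵥ y) -
      ((subcols X S)ᵀ *ᵥ y) ⬝ᵥ ((subcols X S)ᵀ * subcols X S + t⁻¹ • 1)⁻¹ *ᵥ
        ((subcols X S)ᵀ *ᵥ y) := by
  simp only [Rreg, Rstar, proj, sub_mulVec, one_mulVec, dotProduct_sub,
    dotProduct_mul_mul_transpose_mulVec]
  ring

theorem Rreg_sub_Rstar_le {n p : ℕ} {X : Matrix (Fin n) (Fin p) ℝ} {S : Finset (Fin p)} {c : ℝ}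
    (hc : 0 < c) (hcX : ∀ u, c * u ⬝ᵥ u ≤ u ⬝ᵥ ((subcols X S)ᵀ * subcols X S) *ᵥ u)
    {t : ℝ} (ht : 0 ≤ t) (y : Fin n → ℝ) :
    Rreg X S t y - Rstar X S y ≤ t⁻¹ / c * y ⬝ᵥ y := by
  have hsymm : ((subcols X S)ᵀ * subcols X S).IsSymm := by
    rw [IsSymm, transpose_mul, transpose_transpose]
  rw [Rreg_sub_Rstar_eq]
  refine (dotProduct_inv_sub_inv_add_smul_le hsymm hc hcX (inv_nonneg.mpr ht) _).trans ?_
  exact mul_le_mul_of_nonneg_left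
    (dotProduct_gram_inv_mulVec_le _ (isUnit_det_of_le_dotProduct_mulVec hc hcX) y) (by positivity)

open Real

theorem lintegral_exp_mul_sq_gaussianReal {v : NNReal} (hv : v ≠ 0) {θ : ℝ}
    (hθ : 2 * θ * v < 1) :
    ∫⁻ x, ENNReal.ofReal (exp (θ * x ^ 2)) ∂gaussianReal 0 v =
      ENNReal.ofReal √((1 - 2 * θ * v)⁻¹) := by
  have hv' : (0 : ℝ) < v := by positivity
  set b := (1 - 2 * θ * v) / (2 * v) with hb
  have hb0 : 0 < b := div_pos (by linarith) (by positivity)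
  have hdensity : ∀ x, gaussianPDF 0 v x * ENNReal.ofReal (exp (θ * x ^ 2)) =
      ENNReal.ofReal ((√(2 * π * v))⁻¹ * exp (-b * x ^ 2)) := by
    intro x
    rw [gaussianPDF, ← ENNReal.ofReal_mul (gaussianPDFReal_nonneg _ _ _), gaussianPDFReal,
      mul_assoc, ← exp_add]
    congr 3
    rw [hb]
    field_simp
    ring
  rw [gaussianReal_of_var_ne_zero _ hv, lintegral_withDensity_eq_lintegral_mul _
    (measurable_gaussianPDF _ _) (by fun_prop)]
  simp only [Pi.mul_apply, hdensity]
  rw [← ofReal_integral_eq_lintegral_ofReal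
    ((integrable_exp_neg_mul_sq hb0).const_mul _) (ae_of_all _ fun x => by positivity),
    integral_const_mul, integral_gaussian, ← sqrt_inv, ← sqrt_mul (by positivity)]
  congr 2
  rw [hb]
  field_simp

instance (n : ℕ) (v : NNReal) : IsProbabilityMeasure (gaussVec n v) := by
  unfold gaussVec
  infer_instance

theorem lintegral_exp_mul_dotProduct_self_gaussVec (n : ℕ) {v : NNReal} (hv : v ≠ 0) {θ : ℝ}
    (hθ : 2 * θ * v < 1) :
    ∫⁻ e, ENNReal.ofReal (exp (θ * e ⬝ᵥ e)) ∂gaussVec n v =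
      ENNReal.ofReal √((1 - 2 * θ * v)⁻¹) ^ n := by
  have hprod : ∀ e : Fin n → ℝ,
      ENNReal.ofReal (exp (θ * e ⬝ᵥ e)) = ∏ i, ENNReal.ofReal (exp (θ * e i ^ 2)) := by
    intro e
    rw [← ENNReal.ofReal_prod_of_nonneg fun _ _ => (exp_pos _).le, ← exp_sum, dotProduct,
      Finset.mul_sum]
    simp only [sq]
  simp_rw [hprod]
  rw [gaussVec, lintegral_prod_eq_prod_lintegral_of_indepFun _ _
    (iIndepFun_pi (X := fun _ x => ENNReal.ofReal (exp (θ * x ^ 2))) fun _ => by fun_prop)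
    fun i => by fun_prop]
  simp_rw [fun i => (measurePreserving_eval (fun _ : Fin n => gaussianReal 0 v) i).lintegral_comp
    (f := fun x => ENNReal.ofReal (exp (θ * x ^ 2))) (by fun_prop),
    lintegral_exp_mul_sq_gaussianReal hv hθ, Finset.prod_const, Finset.card_fin]

theorem sqrt_three_halves_le_exp : √(3 / 2) ≤ exp (21 / 100) := by
  rw [sqrt_le_iff, ← exp_nat_mul]
  refine ⟨(exp_pos _).le, le_trans ?_ (quadratic_le_exp_of_nonneg (by norm_num))⟩
  norm_num

/-- Chernoff bound at `θ = 1 / (6v)`: `E exp(θ‖e‖²) = (3/2)^{n/2}` and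
`(3/2)^{1/2} ≤ e^{21/100} = e^{1/4 - 1/25}`. -/
theorem gaussVec_lt_dotProduct_self_le (n : ℕ) {v : NNReal} (hv : v ≠ 0) :
    gaussVec n v {e | 3 / 2 * n * v < e ⬝ᵥ e} ≤ ENNReal.ofReal (exp (-(n / 25))) := by
  have hv' : (0 : ℝ) < v := by positivity
  have hθ : 2 * (6 * v : ℝ)⁻¹ * v < 1 := by field_simp; norm_num
  have hmeas : Measurable fun e : Fin n → ℝ => ENNReal.ofReal (exp ((6 * v : ℝ)⁻¹ * e ⬝ᵥ e)) := by
    unfold dotProduct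
    fun_prop
  calc gaussVec n v {e | 3 / 2 * n * v < e ⬝ᵥ e}
      ≤ gaussVec n v {e | ENNReal.ofReal (exp (n / 4)) ≤
          ENNReal.ofReal (exp ((6 * v : ℝ)⁻¹ * e ⬝ᵥ e))} := by
        refine measure_mono fun e he => ENNReal.ofReal_le_ofReal (exp_le_exp.mpr ?_)
        rw [Set.mem_ofPred_eq] at he
        field_simp
        linarith
    _ ≤ (ENNReal.ofReal √(3 / 2) ^ n) / ENNReal.ofReal (exp (n / 4)) := by
        refine (meas_ge_le_lintegral_div hmeas.aemeasurable (by simp [exp_pos])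
          ENNReal.ofReal_ne_top).trans_eq ?_
        rw [lintegral_exp_mul_dotProduct_self_gaussVec n hv hθ]
        congr 4
        field_simp
        norm_num
    _ ≤ ENNReal.ofReal (exp (-(n / 25))) := by
        rw [← ENNReal.ofReal_pow (sqrt_nonneg _), ← ENNReal.ofReal_div_of_pos (exp_pos _)]
        refine ENNReal.ofReal_le_ofReal ((div_le_iff₀ (exp_pos _)).mpr ?_)
        calc √(3 / 2) ^ n ≤ exp (21 / 100) ^ n := by gcongr; exact sqrt_three_halves_le_exp
          _ = exp (-(n / 25)) * exp (n / 4) := by rw [← exp_nat_mul, ← exp_add]; ring_nf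

theorem one_sub_inv_le_gaussVec_dotProduct_self_le (n : ℕ) {v : NNReal} (hv : v ≠ 0) {x : ℝ}
    (hx : 0 < x) (hnx : 25 * log x ≤ n) :
    1 - ENNReal.ofReal x⁻¹ ≤ gaussVec n v {e | e ⬝ᵥ e ≤ 3 / 2 * n * v} := by
  have hmeas : MeasurableSet {e : Fin n → ℝ | e ⬝ᵥ e ≤ 3 / 2 * n * v} :=
    measurableSet_le (by unfold dotProduct; fun_prop) measurable_const
  have hexp : exp (-(n / 25)) ≤ x⁻¹ := by
    rw [← exp_log hx, ← Real.exp_neg]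
    exact exp_le_exp.mpr (by linarith)
  rw [← compl_compl {e : Fin n → ℝ | _}, prob_compl_eq_one_sub hmeas.compl]
  refine tsub_le_tsub_left ?_ 1
  simpa only [Set.compl_ofPred, not_le] using
    (gaussVec_lt_dotProduct_self_le n hv).trans (ENNReal.ofReal_le_ofReal hexp)

theorem stmt_6_general (n p : ℕ) (hn : 1 ≤ n) (hp : 1 < p)
    (X : Matrix (Fin n) (Fin p) ℝ) (βs : Fin p → ℝ) (σ σ₀ : ℝ)
    (hσ : 0 < σ)
    (r : Finset (Fin p))
    (ν : ℝ) (hν : 0 < ν)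
    (hmin : ∀ v : {j // j ∈ r} → ℝ,
      ν * (v ⬝ᵥ v) ≤ v ⬝ᵥ ((((n : ℝ)⁻¹) • ((subcols X r)ᵀ * subcols X r)).mulVec v))
    (B₁ : ℝ)
    (hsig : (X.mulVec βs) ⬝ᵥ (X.mulVec βs) ≤ B₁ * n * σ ^ 2 * Real.log p)
    (hB₁p : 3 ≤ B₁ * Real.log p) (hn25 : 25 * Real.log p ≤ (n : ℝ)) :
    ENNReal.ofReal (1 - 2 / (p : ℝ)) ≤
      gaussVec n (σ ^ 2).toNNReal
        {e | Rreg X r (σ₀ ^ 2 / σ ^ 2) (X.mulVec βs + e) -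
              Rstar X r (X.mulVec βs + e) ≤
            3 * B₁ * σ ^ 2 * Real.log p / (ν * (σ₀ ^ 2 / σ ^ 2))} := by
  have hn0 : (0 : ℝ) < n := by exact_mod_cast hn
  have hp0 : (0 : ℝ) < p := by positivity
  have hv : (σ ^ 2).toNNReal ≠ 0 := by simp [hσ.ne']
  have hvσ : ((σ ^ 2).toNNReal : ℝ) = σ ^ 2 := Real.coe_toNNReal _ (sq_nonneg σ)
  have hgram : ∀ u, ν * n * u ⬝ᵥ u ≤ u ⬝ᵥ ((subcols X r)ᵀ * subcols X r) *ᵥ u := fun u => by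
    have := mul_le_mul_of_nonneg_left (hmin u) hn0.le
    rwa [smul_mulVec, dotProduct_smul, smul_eq_mul, mul_inv_cancel_left₀ hn0.ne', ← mul_assoc,
      mul_comm (n : ℝ) ν] at this
  refine le_trans ?_ (measure_mono (μ := gaussVec n (σ ^ 2).toNNReal)
    (s := {e | e ⬝ᵥ e ≤ 3 / 2 * n * ((σ ^ 2).toNNReal : ℝ)}) fun e he => ?_)
  · calc ENNReal.ofReal (1 - 2 / p) ≤ 1 - ENNReal.ofReal (p : ℝ)⁻¹ := by
          rw [← ENNReal.ofReal_one, ← ENNReal.ofReal_sub _ (by positivity), inv_eq_one_div]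
          exact ENNReal.ofReal_le_ofReal (by gcongr; norm_num)
      _ ≤ _ := one_sub_inv_le_gaussVec_dotProduct_self_le n hv hp0 hn25
  · rw [Set.mem_ofPred_eq, hvσ] at he
    calc _ ≤ (σ₀ ^ 2 / σ ^ 2)⁻¹ / (ν * n) * (X *ᵥ βs + e) ⬝ᵥ (X *ᵥ βs + e) :=
          Rreg_sub_Rstar_le (by positivity) hgram (by positivity) _
      _ ≤ (σ₀ ^ 2 / σ ^ 2)⁻¹ / (ν * n) * (3 * (B₁ * n * σ ^ 2 * Real.log p)) := by
          refine mul_le_mul_of_nonneg_left ((dotProduct_self_add_le _ e).trans ?_) (by positivity)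
          nlinarith [mul_le_mul_of_nonneg_right hB₁p (by positivity : 0 ≤ n * σ ^ 2)]
      _ = _ := by field_simp

/-- Under the signal-size, eigenvalue and sample-size conditions, with
`y = Xβ* + e`, `e ~ N(0, σ² Iₙ)` and `σ̃₀² = σ₀²/σ²`,
`P[R_r − R_r^* ≤ 3 B₁ σ² log p / (ν σ̃₀²)] ≥ 1 − 2 p⁻¹`. -/
theorem stmt_6 (n p : ℕ) (hn : 1 ≤ n) (hp : 1 < p)
    (X : Matrix (Fin n) (Fin p) ℝ) (βs : Fin p → ℝ) (σ σ₀ : ℝ)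
    (hσ : 0 < σ) (hσ₀ : 0 < σ₀)
    (r : Finset (Fin p)) (hrank : IsUnit ((subcols X r)ᵀ * subcols X r).det)
    (ν : ℝ) (hν : 0 < ν)
    (hmin : ∀ v : {j // j ∈ r} → ℝ,
      ν * (v ⬝ᵥ v) ≤ v ⬝ᵥ ((((n : ℝ)⁻¹) • ((subcols X r)ᵀ * subcols X r)).mulVec v))
    (B₁ : ℝ) (hB₁ : 1 ≤ B₁)
    (hsig : (X.mulVec βs) ⬝ᵥ (X.mulVec βs) ≤ B₁ * n * σ ^ 2 * Real.log p)
    (hB₁p : 3 ≤ B₁ * Real.log p) (hn25 : 25 * Real.log p ≤ (n : ℝ)) :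
    ENNReal.ofReal (1 - 2 / (p : ℝ)) ≤
      gaussVec n (σ ^ 2).toNNReal
        {e | Rreg X r (σ₀ ^ 2 / σ ^ 2) (X.mulVec βs + e) -
              Rstar X r (X.mulVec βs + e) ≤
            3 * B₁ * σ ^ 2 * Real.log p / (ν * (σ₀ ^ 2 / σ ^ 2))} :=
  stmt_6_general n p hn hp X βs σ σ₀ hσ r ν hν hmin B₁ hsig hB₁p hn25
end
end

section
/- Let r₁ ⊊ r₂ be index sets with |r₂| ≤ L, and suppose X_{r₂} has full column rank with λ_min(n^{-1} X_{r₂}^T X_{r₂}) ≥ ν for some ν > 0. Then λ_min( X_{r₂ \ r₁}^T (I_n − Φ_{r₁}) X_{r₂ \ r₁} ) ≥ n ν. -/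
open Matrix

noncomputable section

/-! Put `y = X_{r₂∖r₁} v`. The quadratic form `yᵀ (I - Φ_{r₁}) y` is the squared residual
`‖y - X_{r₁} w‖²` of the least-squares fit `w`, and `y - X_{r₁} w = X_{r₂} (v, -w)` after
reordering the columns of `X_{r₂}` as `r₂ ∖ r₁` followed by `r₁`. The eigenvalue bound on
`X_{r₂}` then gives at least `n ν (‖v‖² + ‖w‖²) ≥ n ν ‖v‖²`. -/

lemma dotProduct_mulVec_transpose_mul_self {m k : Type*} [Fintype m] [Fintype k]
    (M : Matrix m k ℝ) (x : k → ℝ) : x ⬝ᵥ (Mᵀ * M) *ᵥ x = (M *ᵥ x) ⬝ᵥ (M *ᵥ x) := by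
  rw [← mulVec_mulVec, dotProduct_mulVec, vecMul_transpose]

lemma dotProduct_mulVec_transpose_mul_mul {m k : Type*} [Fintype m] [Fintype k]
    (M : Matrix m k ℝ) (Q : Matrix m m ℝ) (x : k → ℝ) :
    x ⬝ᵥ (Mᵀ * Q * M) *ᵥ x = (M *ᵥ x) ⬝ᵥ Q *ᵥ (M *ᵥ x) := by
  rw [← mulVec_mulVec, ← mulVec_mulVec, dotProduct_mulVec, vecMul_transpose]

section Residual

variable {m a b : Type*} [Fintype m] [Fintype a] [Fintype b] [DecidableEq m] [DecidableEq b]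

/-- When `Bᵀ B` is singular, Lean's `⁻¹` makes the "projection" zero and `w = 0` works. -/
lemma exists_dotProduct_one_sub_proj_mulVec_eq (B : Matrix m b ℝ) (y : m → ℝ) :
    ∃ w : b → ℝ, y ⬝ᵥ (1 - B * (Bᵀ * B)⁻¹ * Bᵀ) *ᵥ y = (y - B *ᵥ w) ⬝ᵥ (y - B *ᵥ w) := by
  by_cases hB : IsUnit (Bᵀ * B).det
  · set w := (Bᵀ * B)⁻¹ *ᵥ (Bᵀ *ᵥ y)
    refine ⟨w, ?_⟩
    have hr : (1 - B * (Bᵀ * B)⁻¹ * Bᵀ) *ᵥ y = y - B *ᵥ w := by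
      simp only [w, sub_mulVec, one_mulVec, mulVec_mulVec, Matrix.mul_assoc]
    have hBr : Bᵀ *ᵥ (y - B *ᵥ w) = 0 := by
      simp only [w, mulVec_sub, mulVec_mulVec, ← Matrix.mul_assoc, mul_nonsing_inv _ hB,
        Matrix.one_mul, sub_self]
    have hBw : (B *ᵥ w) ⬝ᵥ (y - B *ᵥ w) = 0 := by
      rw [dotProduct_comm, dotProduct_mulVec, ← mulVec_transpose, hBr, zero_dotProduct]
    calc y ⬝ᵥ (1 - B * (Bᵀ * B)⁻¹ * Bᵀ) *ᵥ y = y ⬝ᵥ (y - B *ᵥ w) := by rw [hr]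
      _ = (y - B *ᵥ w) ⬝ᵥ (y - B *ᵥ w) := by rw [sub_dotProduct, hBw, sub_zero]
  · refine ⟨0, ?_⟩
    simp [nonsing_inv_apply_not_isUnit _ hB]

theorem mul_dotProduct_self_le_dotProduct_one_sub_proj (A : Matrix m a ℝ) (B : Matrix m b ℝ)
    {c : ℝ} (hc : 0 ≤ c)
    (h : ∀ u, c * (u ⬝ᵥ u) ≤ (fromCols A B *ᵥ u) ⬝ᵥ (fromCols A B *ᵥ u)) (v : a → ℝ) :
    c * (v ⬝ᵥ v) ≤ v ⬝ᵥ (Aᵀ * (1 - B * (Bᵀ * B)⁻¹ * Bᵀ) * A) *ᵥ v := by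
  obtain ⟨w, hw⟩ := exists_dotProduct_one_sub_proj_mulVec_eq B (A *ᵥ v)
  have hu := h (Sum.elim v (-w))
  rw [fromCols_mulVec_sumElim, sumElim_dotProduct_sumElim, mulVec_neg, ← sub_eq_add_neg] at hu
  calc c * (v ⬝ᵥ v) ≤ c * (v ⬝ᵥ v + -w ⬝ᵥ -w) := by
        have : 0 ≤ -w ⬝ᵥ -w := Fintype.sum_nonneg fun _ => mul_self_nonneg _
        nlinarith
    _ ≤ (A *ᵥ v - B *ᵥ w) ⬝ᵥ (A *ᵥ v - B *ᵥ w) := hu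
    _ = v ⬝ᵥ (Aᵀ * (1 - B * (Bᵀ * B)⁻¹ * Bᵀ) * A) *ᵥ v := by
        rw [← hw, dotProduct_mulVec_transpose_mul_mul]

end Residual

section Columns

variable {n p : ℕ} {r₁ r₂ : Finset (Fin p)}

def sdiffSumEquivOfSubset (h : r₁ ⊆ r₂) : {j // j ∈ r₂ \ r₁} ⊕ {j // j ∈ r₁} ≃ {j // j ∈ r₂} where
  toFun := Sum.elim (fun j => ⟨j, (Finset.mem_sdiff.1 j.2).1⟩) (fun j => ⟨j, h j.2⟩)
  invFun j := if hj : j.1 ∈ r₁ then .inr ⟨j, hj⟩ else .inl ⟨j, Finset.mem_sdiff.2 ⟨j.2, hj⟩⟩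
  left_inv := by
    rintro (j | j)
    · simp [(Finset.mem_sdiff.1 j.2).2]
    · simp [j.2]
  right_inv j := by by_cases hj : j.1 ∈ r₁ <;> simp [hj]

lemma fromCols_subcols_sdiff (X : Matrix (Fin n) (Fin p) ℝ) (h : r₁ ⊆ r₂) :
    fromCols (subcols X (r₂ \ r₁)) (subcols X r₁) =
      (subcols X r₂).submatrix id (sdiffSumEquivOfSubset h) := by
  ext i (j | j) <;> rfl

end Columns

lemma mul_mul_dotProduct_self_le_of_le_inv_smul {m k : Type*} [Fintype m] [Fintype k]
    (M : Matrix m k ℝ) {t c : ℝ} (ht : 0 ≤ t) {u : k → ℝ}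
    (h : c * (u ⬝ᵥ u) ≤ u ⬝ᵥ (t⁻¹ • (Mᵀ * M)) *ᵥ u) :
    t * c * (u ⬝ᵥ u) ≤ (M *ᵥ u) ⬝ᵥ (M *ᵥ u) := by
  rw [smul_mulVec, dotProduct_smul, smul_eq_mul, dotProduct_mulVec_transpose_mul_self] at h
  have hQ : 0 ≤ (M *ᵥ u) ⬝ᵥ (M *ᵥ u) := Fintype.sum_nonneg fun _ => mul_self_nonneg _
  calc t * c * (u ⬝ᵥ u) ≤ t * (t⁻¹ * ((M *ᵥ u) ⬝ᵥ (M *ᵥ u))) := by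
        rw [mul_assoc]; exact mul_le_mul_of_nonneg_left h ht
    _ ≤ (M *ᵥ u) ⬝ᵥ (M *ᵥ u) := by
        rw [← mul_assoc]
        exact mul_le_of_le_one_left hQ (mul_inv_le_one_of_le₀ le_rfl ht)

theorem stmt_8_general {n p : ℕ} (X : Matrix (Fin n) (Fin p) ℝ)
    (r₁ r₂ : Finset (Fin p)) (h12 : r₁ ⊂ r₂)
    (ν : ℝ) (hν : 0 < ν)
    (hmin : ∀ v : {j // j ∈ r₂} → ℝ,
      ν * (v ⬝ᵥ v) ≤ v ⬝ᵥ ((((n : ℝ)⁻¹) • ((subcols X r₂)ᵀ * subcols X r₂)).mulVec v)) :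
    ∀ v : {j // j ∈ r₂ \ r₁} → ℝ,
      (n : ℝ) * ν * (v ⬝ᵥ v) ≤
        v ⬝ᵥ (((subcols X (r₂ \ r₁))ᵀ *
          ((1 : Matrix (Fin n) (Fin n) ℝ) - proj X r₁) *
            subcols X (r₂ \ r₁)).mulVec v) := by
  set e := sdiffSumEquivOfSubset h12.subset
  refine mul_dotProduct_self_le_dotProduct_one_sub_proj _ _ (by positivity) fun u => ?_
  rw [fromCols_subcols_sdiff X h12.subset, submatrix_mulVec_equiv, Function.comp_id]
  have hC := mul_mul_dotProduct_self_le_of_le_inv_smul _ (Nat.cast_nonneg n) (hmin (u ∘ e.symm))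
  rwa [comp_equiv_dotProduct_comp_equiv] at hC

/-- Let `r₁ ⊊ r₂` with `|r₂| ≤ L`, and suppose `X_{r₂}` has full column rank
with `λ_min(n⁻¹ X_{r₂}ᵀ X_{r₂}) ≥ ν > 0` (stated via the quadratic form).  Then
`λ_min(X_{r₂∖r₁}ᵀ (Iₙ − Φ_{r₁}) X_{r₂∖r₁}) ≥ n ν` (again via the quadratic form). -/
theorem stmt_8 {n p : ℕ} (X : Matrix (Fin n) (Fin p) ℝ) (L : ℕ)
    (r₁ r₂ : Finset (Fin p)) (h12 : r₁ ⊂ r₂) (hL : r₂.card ≤ L)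
    (hrank : IsUnit ((subcols X r₂)ᵀ * subcols X r₂).det)
    (ν : ℝ) (hν : 0 < ν)
    (hmin : ∀ v : {j // j ∈ r₂} → ℝ,
      ν * (v ⬝ᵥ v) ≤ v ⬝ᵥ ((((n : ℝ)⁻¹) • ((subcols X r₂)ᵀ * subcols X r₂)).mulVec v)) :
    ∀ v : {j // j ∈ r₂ \ r₁} → ℝ,
      (n : ℝ) * ν * (v ⬝ᵥ v) ≤
        v ⬝ᵥ (((subcols X (r₂ \ r₁))ᵀ *
          ((1 : Matrix (Fin n) (Fin n) ℝ) - proj X r₁) *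
            subcols X (r₂ \ r₁)).mulVec v) :=
  stmt_8_general X r₁ r₂ h12 ν hν hmin
end
end

section
/- Let r ⊆ {1,…,p} be an index set and k ∉ r a column index such that the augmented matrix X_{r ∪ {k}} = [X_r, X_k] has full column rank. Then Φ_{r ∪ {k}} − Φ_r = (I_n − Φ_r) X_k X_k^T (I_n − Φ_r) / ( X_k^T (I_n − Φ_r) X_k ). -/
open Matrix

noncomputable section

/-!
Write `Φ = Φ_r`, `a = X_k`, `v = (I - Φ) a` and `c = aᵀ v`. Since `I - Φ` is a symmetric
idempotent, the right-hand side is `c⁻¹ v vᵀ` and `c = ‖v‖²`; full column rank keeps `a` out of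
the column span of `X_r`, so `v ≠ 0` and `c ≠ 0`. The claim becomes `P = Q` for the symmetric
matrices `P = Φ_{r∪{k}}` and `Q = Φ + c⁻¹ v vᵀ`. Now `P Q = Q` because `P` fixes `a` and the
columns of `X_r`, hence `Φ` and `v`; and `Q P = P` because `Q` fixes every column of `X_{r∪{k}}`
(`v` is orthogonal to the columns of `X_r`, and `Q a = Φ a + v = a`). Two symmetric matrices with
`P Q = Q` and `Q P = P` coincide: `P = (Q P)ᵀ = P Q = Q`.
-/

namespace Matrix

section Symmetric

variable {m K : Type*} [Fintype m] [CommRing K]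

theorem IsSymm.eq_of_mul_eq_of_mul_eq {P Q : Matrix m m K} (hP : P.IsSymm) (hQ : Q.IsSymm)
    (hPQ : P * Q = Q) (hQP : Q * P = P) : P = Q := by
  rw [← hQP, ← hP.eq, ← hQ.eq, ← transpose_mul, hPQ, hQ.eq]

theorem IsSymm.dotProduct_mulVec_eq_of_isIdempotentElem {R : Matrix m m K} (hR : R.IsSymm)
    (hRR : IsIdempotentElem R) (a : m → K) : a ⬝ᵥ R *ᵥ a = R *ᵥ a ⬝ᵥ R *ᵥ a := by
  conv_rhs => rw [dotProduct_mulVec, ← mulVec_transpose, hR.eq, mulVec_mulVec, hRR.eq]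
  exact dotProduct_comm _ _

theorem IsSymm.mul_vecMulVec_mul {R : Matrix m m K} (hR : R.IsSymm) (a : m → K) :
    R * vecMulVec a a * R = vecMulVec (R *ᵥ a) (R *ᵥ a) := by
  rw [mul_vecMulVec, vecMulVec_mul, ← mulVec_transpose, hR.eq]

theorem IsSymm.dotProduct_sub_mulVec_eq_zero_iff [DecidableEq m] [LinearOrder K]
    [IsStrictOrderedRing K] {Φ : Matrix m m K} (hΦ : Φ.IsSymm) (hΦΦ : IsIdempotentElem Φ) (a : m → K) :
    a ⬝ᵥ (a - Φ *ᵥ a) = 0 ↔ Φ *ᵥ a = a := by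
  have h : a - Φ *ᵥ a = (1 - Φ) *ᵥ a := by rw [sub_mulVec, one_mulVec]
  rw [h, (isSymm_one.sub hΦ).dotProduct_mulVec_eq_of_isIdempotentElem hΦΦ.one_sub,
    dotProduct_self_eq_zero, ← h, sub_eq_zero, eq_comm]

theorem add_smul_vecMulVec_mulVec (Φ : Matrix m m K) (c : K) (v x : m → K) :
    (Φ + c • vecMulVec v v) *ᵥ x = Φ *ᵥ x + (c * (v ⬝ᵥ x)) • v := by
  rw [add_mulVec, smul_mulVec, vecMulVec_mulVec, op_smul_eq_smul, smul_smul]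

end Symmetric

section ProjUpdate

variable {m K : Type*} [Fintype m] [Field K]

/-- If `Φ` is the orthogonal projection onto `W` and `a ∉ W`, this is the orthogonal projection
onto `W + K a`. -/
def projUpdate (Φ : Matrix m m K) (a : m → K) : Matrix m m K :=
  Φ + (a ⬝ᵥ (a - Φ *ᵥ a))⁻¹ • vecMulVec (a - Φ *ᵥ a) (a - Φ *ᵥ a)

theorem isSymm_projUpdate {Φ : Matrix m m K} (hΦ : Φ.IsSymm) (a : m → K) :
    (projUpdate Φ a).IsSymm :=
  hΦ.add (IsSymm.smul (transpose_vecMulVec _ _) _)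

theorem projUpdate_mulVec_self {Φ : Matrix m m K} {a : m → K} (hc : a ⬝ᵥ (a - Φ *ᵥ a) ≠ 0) :
    projUpdate Φ a *ᵥ a = a := by
  rw [projUpdate, add_smul_vecMulVec_mulVec, dotProduct_comm (a - Φ *ᵥ a), inv_mul_cancel₀ hc,
    one_smul, add_sub_cancel]

theorem IsSymm.projUpdate_mulVec_of_mulVec_eq {Φ : Matrix m m K} (hΦ : Φ.IsSymm) (a : m → K)
    {x : m → K} (hx : Φ *ᵥ x = x) : projUpdate Φ a *ᵥ x = x := by
  rw [projUpdate, add_smul_vecMulVec_mulVec, sub_dotProduct, ← vecMul_transpose Φ a,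
    ← dotProduct_mulVec, hΦ.eq, hx, sub_self, mul_zero, zero_smul, add_zero]

theorem mul_projUpdate {P Φ : Matrix m m K} {a : m → K} (hPΦ : P * Φ = Φ) (hPa : P *ᵥ a = a) :
    P * projUpdate Φ a = projUpdate Φ a := by
  rw [projUpdate, Matrix.mul_add, Matrix.mul_smul, mul_vecMulVec, mulVec_sub, mulVec_mulVec, hPΦ,
    hPa]

end ProjUpdate

section GramProjection

variable {m κ K : Type*} [Fintype m] [Fintype κ] [DecidableEq κ] [Field K]

/-- `proj X S` is `gramProj (subcols X S)` by definition. -/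
def gramProj (M : Matrix m κ K) : Matrix m m K :=
  M * (Mᵀ * M)⁻¹ * Mᵀ

theorem isSymm_gramProj (M : Matrix m κ K) : (gramProj M).IsSymm := by
  rw [IsSymm, gramProj, transpose_mul, transpose_mul, transpose_nonsing_inv, transpose_mul,
    transpose_transpose, Matrix.mul_assoc]

theorem gramProj_mul_self {M : Matrix m κ K} (hM : IsUnit (Mᵀ * M).det) :
    gramProj M * M = M := by
  rw [gramProj, Matrix.mul_assoc, Matrix.mul_assoc, nonsing_inv_mul _ hM, Matrix.mul_one]

theorem mul_gramProj_of_mul_eq {M : Matrix m κ K} {Q : Matrix m m K} (h : Q * M = M) :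
    Q * gramProj M = gramProj M := by
  rw [gramProj, ← Matrix.mul_assoc, ← Matrix.mul_assoc, h]

theorem gramProj_eq_of_isSymm {M : Matrix m κ K} {Q : Matrix m m K} (hQ : Q.IsSymm)
    (hQM : Q * M = M) (hPQ : gramProj M * Q = Q) : gramProj M = Q :=
  (isSymm_gramProj M).eq_of_mul_eq_of_mul_eq hQ hPQ (mul_gramProj_of_mul_eq hQM)

theorem isIdempotentElem_gramProj {M : Matrix m κ K} (hM : IsUnit (Mᵀ * M).det) :
    IsIdempotentElem (gramProj M) :=
  mul_gramProj_of_mul_eq (gramProj_mul_self hM)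

theorem gramProj_mulVec_mem_span (M : Matrix m κ K) (x : m → K) :
    gramProj M *ᵥ x ∈ Submodule.span K (Set.range M.col) := by
  rw [← range_mulVecLin, gramProj, Matrix.mul_assoc, ← mulVec_mulVec]
  exact LinearMap.mem_range_self _ _

theorem isUnit_det_transpose_mul_self_iff [LinearOrder K] [IsStrictOrderedRing K]
    (M : Matrix m κ K) : IsUnit (Mᵀ * M).det ↔ LinearIndependent K M.col := by
  rw [← isUnit_iff_isUnit_det, ← mulVec_injective_iff_isUnit, ← mulVec_injective_iff,
    ← coe_mulVecLin, ← coe_mulVecLin, ← LinearMap.ker_eq_bot, ← LinearMap.ker_eq_bot,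
    ker_mulVecLin_transpose_mul_self]

end GramProjection

end Matrix

section Subcols

variable {n p : ℕ}

theorem mul_subcols (Q : Matrix (Fin n) (Fin n) ℝ) (X : Matrix (Fin n) (Fin p) ℝ)
    (S : Finset (Fin p)) : Q * subcols X S = subcols (Q * X) S := rfl

theorem mul_subcols_eq_self_iff {Q : Matrix (Fin n) (Fin n) ℝ} {X : Matrix (Fin n) (Fin p) ℝ}
    {S : Finset (Fin p)} : Q * subcols X S = subcols X S ↔ ∀ j ∈ S, Q *ᵥ X.col j = X.col j := by
  rw [mul_subcols]
  constructor
  · intro h j hj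
    ext i
    exact congrFun₂ h i ⟨j, hj⟩
  · intro h
    ext i j
    exact congrFun (h j j.2) i

theorem isUnit_det_gram_subcols_iff (X : Matrix (Fin n) (Fin p) ℝ) (S : Finset (Fin p)) :
    IsUnit ((subcols X S)ᵀ * subcols X S).det ↔ LinearIndepOn ℝ X.col ↑S :=
  isUnit_det_transpose_mul_self_iff _

theorem proj_mulVec_mem_span (X : Matrix (Fin n) (Fin p) ℝ) (S : Finset (Fin p))
    (x : Fin n → ℝ) : proj X S *ᵥ x ∈ Submodule.span ℝ (X.col '' ↑S) := by
  rw [Set.image_eq_range]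
  exact gramProj_mulVec_mem_span _ x

end Subcols

/-- For `k ∉ r` with `X_{r ∪ {k}}` of full column rank,
`Φ_{r∪{k}} − Φ_r = (Iₙ − Φ_r) X_k X_kᵀ (Iₙ − Φ_r) / (X_kᵀ (Iₙ − Φ_r) X_k)`. -/
theorem stmt_10 {n p : ℕ} (X : Matrix (Fin n) (Fin p) ℝ) (r : Finset (Fin p)) (k : Fin p)
    (hk : k ∉ r)
    (hrank : IsUnit ((subcols X (insert k r))ᵀ * subcols X (insert k r)).det) :
    proj X (insert k r) - proj X r =
      ((fun i => X i k) ⬝ᵥ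
          (((1 : Matrix (Fin n) (Fin n) ℝ) - proj X r).mulVec fun i => X i k))⁻¹ •
        (((1 : Matrix (Fin n) (Fin n) ℝ) - proj X r) *
          Matrix.vecMulVec (fun i => X i k) (fun i => X i k) *
          ((1 : Matrix (Fin n) (Fin n) ℝ) - proj X r)) := by
  have hΦ : (proj X r).IsSymm := isSymm_gramProj _
  rw [show (fun i => X i k) = X.col k from rfl, (isSymm_one.sub hΦ).mul_vecMulVec_mul,
    sub_eq_iff_eq_add', sub_mulVec, one_mulVec]
  change proj X (insert k r) = projUpdate (proj X r) (X.col k)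
  obtain ⟨hr, hk_span⟩ :
      LinearIndepOn ℝ X.col ↑r ∧ X.col k ∉ Submodule.span ℝ (X.col '' ↑r) := by
    rwa [← linearIndepOn_insert (Finset.mem_coe.not.2 hk), ← Finset.coe_insert,
      ← isUnit_det_gram_subcols_iff]
  have hgram_r := (isUnit_det_gram_subcols_iff X r).2 hr
  have hΦ_fix : ∀ j ∈ r, proj X r *ᵥ X.col j = X.col j :=
    mul_subcols_eq_self_iff.1 (gramProj_mul_self hgram_r)
  have hP_fix : ∀ j ∈ insert k r, proj X (insert k r) *ᵥ X.col j = X.col j :=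
    mul_subcols_eq_self_iff.1 (gramProj_mul_self hrank)
  have hc : X.col k ⬝ᵥ (X.col k - proj X r *ᵥ X.col k) ≠ 0 := fun h =>
    hk_span ((hΦ.dotProduct_sub_mulVec_eq_zero_iff (isIdempotentElem_gramProj hgram_r) _).1 h ▸
      proj_mulVec_mem_span X r _)
  refine gramProj_eq_of_isSymm (isSymm_projUpdate hΦ _) ?_ (mul_projUpdate ?_ ?_)
  · refine mul_subcols_eq_self_iff.2 fun j hj => ?_
    rcases Finset.mem_insert.1 hj with rfl | hj
    · exact projUpdate_mulVec_self hc
    · exact hΦ.projUpdate_mulVec_of_mulVec_eq _ (hΦ_fix j hj)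
  · exact mul_gramProj_of_mul_eq
      (mul_subcols_eq_self_iff.2 fun j hj => hP_fix j (Finset.mem_insert_of_mem hj))
  · exact hP_fix k (Finset.mem_insert_self k r)
end
end

section
/- Let K ≥ 1 and let ω₀ = 0 and ω₁,…,ω_K > 0 satisfy ω_K/K < ω_{K−1}/(K−1) < ⋯ < ω₂/2 < ω₁. Let p ≥ 1 and for each j ∈ {1,…,p} let M_j, M_j^* ⊆ {1,…,K} be subsets; put M̃_j = M_j ∪ M_j^*, m_j = |M_j|, m̃_j = |M̃_j|, m_j^* = |M_j^*|. Then Σ_{j=1}^p ( ω_{m̃_j} − ω_{m_j} ) ≤ Σ_{j : M_j^* ≠ ∅} |M_j^* \ M_j| · ω_{m_j^*} / m_j^*. Equivalently, with l_k = #{j : m_j = k} and l̃_k = #{j : m̃_j = k}, Σ_{k=1}^K ω_k (l̃_k − l_k) ≤ Σ_{j : M_j^* ≠ ∅} |M_j^* \ M_j| · ω_{m_j^*} / m_j^*. -/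
open Finset

/-
If `k ↦ ω k / k` is antitone on `[1, K]` and `ω 0 = 0`, then `ω a ≥ a · ω b / b` for `a ≤ b`,
so growing a set from `a` to `b` elements gains at most `(b - a) · ω b / b ≤ (b - a) · ω s / s`
for any `1 ≤ s ≤ b`. With `a = |M|`, `b = |M ∪ M*|`, `s = |M*|` one has `b - a = |M* \ M|`;
summing over `j` gives the first inequality, and regrouping both sides by cardinality gives
the second.
-/

theorem antitoneOn_div_of_lt_div_sub_one {K : ℕ} {ω : ℕ → ℝ}
    (hchain : ∀ k : ℕ, 2 ≤ k → k ≤ K → ω k / k < ω (k - 1) / ((k : ℝ) - 1)) :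
    AntitoneOn (fun k : ℕ => ω k / k) (Set.Icc 1 K) := by
  refine antitoneOn_of_le_sub_one Set.ordConnected_Icc fun k _ hk hk' => ?_
  have h2 : 2 ≤ k := by simp only [Set.mem_Icc] at hk'; omega
  simpa [Nat.cast_sub (by omega : 1 ≤ k)] using (hchain k h2 hk.2).le

section Increment

variable {K : ℕ} {ω : ℕ → ℝ}

theorem sub_le_mul_div_of_antitoneOn (hanti : AntitoneOn (fun k : ℕ => ω k / k) (Set.Icc 1 K))
    (hω0 : ω 0 = 0) {a b s : ℕ} (hab : a ≤ b) (hs : 1 ≤ s) (hsb : s ≤ b) (hbK : b ≤ K) :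
    ω b - ω a ≤ ((b : ℝ) - a) * (ω s / s) := by
  have hb : (0 : ℝ) < b := by exact_mod_cast hs.trans hsb
  have hbs : ω b / b ≤ ω s / s := hanti ⟨hs, hsb.trans hbK⟩ ⟨hs.trans hsb, hbK⟩ hsb
  have hab' : (a : ℝ) * (ω b / b) ≤ ω a := by
    rcases Nat.eq_zero_or_pos a with rfl | ha
    · simp [hω0]
    · have ha' : (0 : ℝ) < a := by exact_mod_cast ha
      calc (a : ℝ) * (ω b / b) ≤ a * (ω a / a) := mul_le_mul_of_nonneg_left
            (hanti ⟨ha, hab.trans hbK⟩ ⟨ha.trans_le hab, hbK⟩ hab) ha'.le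
        _ = ω a := by field_simp
  calc ω b - ω a ≤ b * (ω b / b) - a * (ω b / b) := by
        rw [mul_div_cancel₀ _ hb.ne']; linarith
    _ = ((b : ℝ) - a) * (ω b / b) := by ring
    _ ≤ ((b : ℝ) - a) * (ω s / s) :=
        mul_le_mul_of_nonneg_left hbs (sub_nonneg.mpr (by exact_mod_cast hab))

theorem sub_le_card_sdiff_mul_div_of_antitoneOn
    (hanti : AntitoneOn (fun k : ℕ => ω k / k) (Set.Icc 1 K)) (hω0 : ω 0 = 0)
    (A B : Finset (Fin K)) (hB : B.Nonempty) :
    ω (A ∪ B).card - ω A.card ≤ (B \ A).card * ω B.card / B.card := by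
  have hcard : (B \ A).card + A.card = (A ∪ B).card := by
    rw [card_sdiff_add_card, union_comm]
  have hcard' : ((B \ A).card : ℝ) = ((A ∪ B).card : ℝ) - A.card := by
    rw [← hcard]; push_cast; ring
  rw [mul_div_assoc, hcard']
  exact sub_le_mul_div_of_antitoneOn hanti hω0 (card_le_card subset_union_left)
    (card_pos.mpr hB) (card_le_card subset_union_right) (card_le_univ _ |>.trans (by simp))

end Increment

theorem sum_Icc_mul_card_filter_eq_sum {ι : Type*} [Fintype ι] {K : ℕ} {ω : ℕ → ℝ}
    (hω0 : ω 0 = 0) (f : ι → ℕ) (hf : ∀ j, f j ≤ K) :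
    ∑ k ∈ Icc 1 K, ω k * ((univ.filter fun j => f j = k).card : ℝ) = ∑ j, ω (f j) := by
  rw [← sum_fiberwise_of_maps_to (fun j _ => mem_Icc.mpr ⟨Nat.zero_le _, hf j⟩)
      (fun j => ω (f j)), ← insert_Icc_add_one_left_eq_Icc (Nat.zero_le K), sum_insert (by simp)]
  have hzero : ∑ j ∈ univ.filter (fun j => f j = 0), ω (f j) = 0 :=
    sum_eq_zero fun j hj => by rw [(mem_filter.mp hj).2, hω0]
  rw [hzero, zero_add]
  refine sum_congr rfl fun k _ => ?_
  rw [sum_congr rfl fun j hj => by rw [(mem_filter.mp hj).2], sum_const, nsmul_eq_mul, mul_comm]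

theorem stmt_12_general (K p : ℕ) (ω : ℕ → ℝ) (hω0 : ω 0 = 0)
    (hchain : ∀ k : ℕ, 2 ≤ k → k ≤ K → ω k / k < ω (k - 1) / ((k : ℝ) - 1))
    (M Mstar : Fin p → Finset (Fin K)) :
    (∑ j : Fin p, (ω ((M j ∪ Mstar j).card) - ω ((M j).card)) ≤
      ∑ j ∈ Finset.univ.filter (fun j : Fin p => Mstar j ≠ ∅),
        ((Mstar j \ M j).card : ℝ) * ω ((Mstar j).card) / ((Mstar j).card : ℝ)) ∧
    (∑ k ∈ Finset.Icc 1 K,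
        ω k * (((Finset.univ.filter fun j : Fin p => (M j ∪ Mstar j).card = k).card : ℝ) -
          ((Finset.univ.filter fun j : Fin p => (M j).card = k).card : ℝ)) ≤
      ∑ j ∈ Finset.univ.filter (fun j : Fin p => Mstar j ≠ ∅),
        ((Mstar j \ M j).card : ℝ) * ω ((Mstar j).card) / ((Mstar j).card : ℝ)) := by
  have hanti := antitoneOn_div_of_lt_div_sub_one hchain
  have hsum : ∑ j : Fin p, (ω ((M j ∪ Mstar j).card) - ω ((M j).card)) ≤
      ∑ j ∈ Finset.univ.filter (fun j : Fin p => Mstar j ≠ ∅),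
        ((Mstar j \ M j).card : ℝ) * ω ((Mstar j).card) / ((Mstar j).card : ℝ) := by
    rw [sum_filter]
    refine sum_le_sum fun j _ => ?_
    split_ifs with hMs
    · exact sub_le_card_sdiff_mul_div_of_antitoneOn hanti hω0 _ _ (nonempty_iff_ne_empty.mpr hMs)
    · simp [not_not.mp hMs]
  have hcard (N : Fin p → Finset (Fin K)) (j : Fin p) : (N j).card ≤ K :=
    card_le_univ _ |>.trans (by simp)
  refine ⟨hsum, ?_⟩
  simp only [mul_sub, sum_sub_distrib]
  rwa [sum_Icc_mul_card_filter_eq_sum hω0 _ (hcard _),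
    sum_Icc_mul_card_filter_eq_sum hω0 _ (hcard _), ← sum_sub_distrib]

/-- Let `K ≥ 1`, `ω 0 = 0`, `ω 1, …, ω K > 0` with
`ω K / K < ω (K-1)/(K-1) < ⋯ < ω 2 / 2 < ω 1`.  For subsets `M j, M* j ⊆ {1,…,K}`
(`j = 1,…,p`), putting `M̃ j = M j ∪ M* j`,
`Σ_j (ω |M̃ j| − ω |M j|) ≤ Σ_{j : M* j ≠ ∅} |M* j \ M j| · ω |M* j| / |M* j|`;
equivalently, with `l k = #{j : |M j| = k}` and `l̃ k = #{j : |M̃ j| = k}`,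
`Σ_{k=1}^K ω k (l̃ k − l k) ≤ Σ_{j : M* j ≠ ∅} |M* j \ M j| · ω |M* j| / |M* j|`. -/
theorem stmt_12 (K p : ℕ) (hK : 1 ≤ K) (hp : 1 ≤ p) (ω : ℕ → ℝ) (hω0 : ω 0 = 0)
    (hωpos : ∀ k : ℕ, 1 ≤ k → k ≤ K → 0 < ω k)
    (hchain : ∀ k : ℕ, 2 ≤ k → k ≤ K → ω k / k < ω (k - 1) / ((k : ℝ) - 1))
    (M Mstar : Fin p → Finset (Fin K)) :
    (∑ j : Fin p, (ω ((M j ∪ Mstar j).card) - ω ((M j).card)) ≤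
      ∑ j ∈ Finset.univ.filter (fun j : Fin p => Mstar j ≠ ∅),
        ((Mstar j \ M j).card : ℝ) * ω ((Mstar j).card) / ((Mstar j).card : ℝ)) ∧
    (∑ k ∈ Finset.Icc 1 K,
        ω k * (((Finset.univ.filter fun j : Fin p => (M j ∪ Mstar j).card = k).card : ℝ) -
          ((Finset.univ.filter fun j : Fin p => (M j).card = k).card : ℝ)) ≤
      ∑ j ∈ Finset.univ.filter (fun j : Fin p => Mstar j ≠ ∅),
        ((Mstar j \ M j).card : ℝ) * ω ((Mstar j).card) / ((Mstar j).card : ℝ)) :=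
  stmt_12_general K p ω hω0 hchain M Mstar
end
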